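/- Let f ∈ ℝ^{d_1×…×d_m} be a nonnegative weakly irreducible tensor and 1 < p_1,…,p_m < ∞ such that there exists i ∈ [m] with (m−1)p_i' ≤ p_k for every k ∈ [m]\{i}. Then G is nonexpansive with respect to μ: for every x, y ∈ S^{d−d_i}_{++}, μ(G(x), G(y)) ≤ μ(x, y). -/

import Mathlib

/-!
Common setup: tensors `f : (∀ i, Fin (d i)) → ℝ`, the induced multilinear form,
partial gradients, `ψ_q`, `ℓ^p` norms, Hölder conjugates, singular vectors,
(weak) irreducibility, the maps `σ_i`, `s_{i,k}`, `T_α`, `G`, the quantities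
`Q`, `‖f‖_{p_1,…,p_m}`, `Q_i`, `γ_i^±` and the Hilbert-type metric `μ`.
Points of `ℝ^{d-d_i}` are encoded as full tuples (the maps involved do not
depend on the `i`-th component), with conditions imposed only for `k ≠ i`.
-/

open Finset Filter

noncomputable section

namespace TensorPF

variable {m : ℕ} {d : Fin m → ℕ}

/-- The multilinear form induced by the tensor `f`. -/
def form (f : (∀ i, Fin (d i)) → ℝ) (x : ∀ i, Fin (d i) → ℝ) : ℝ :=
  ∑ j : ∀ i, Fin (d i), f j * ∏ i, x i (j i)

/-- The gradient of the multilinear form in its `i`-th argument. -/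
def grad (f : (∀ i, Fin (d i)) → ℝ) (i : Fin m) (x : ∀ i, Fin (d i) → ℝ) :
    Fin (d i) → ℝ :=
  fun ji => form f (Function.update x i (fun l => if l = ji then (1 : ℝ) else 0))

/-- `ψ_q(y)_j = |y_j|^(q-1) sign(y_j)`. -/
def psi (q : ℝ) {n : ℕ} (y : Fin n → ℝ) : Fin n → ℝ :=
  fun j => |y j| ^ (q - 1) * Real.sign (y j)

/-- The `ℓ^q`-norm on `Fin n → ℝ`. -/
def pnorm (q : ℝ) {n : ℕ} (y : Fin n → ℝ) : ℝ :=
  (∑ j, |y j| ^ q) ^ (1 / q)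

/-- The Hölder conjugate `q' = q/(q-1)`. -/
def conjExp (q : ℝ) : ℝ := q / (q - 1)

/-- `σ_i(x) = sign(f(x)) ψ_{p_i'}(∇_i f(x))`. -/
def sigma (f : (∀ i, Fin (d i)) → ℝ) (p : Fin m → ℝ) (i : Fin m)
    (x : ∀ i, Fin (d i) → ℝ) : Fin (d i) → ℝ :=
  fun ji => Real.sign (form f x) * psi (conjExp (p i)) (grad f i x) ji

/-- `Q(x) = |f(x)| / ∏ i ‖x_i‖_{p_i}`. -/
def Qform (f : (∀ i, Fin (d i)) → ℝ) (p : Fin m → ℝ)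
    (x : ∀ i, Fin (d i) → ℝ) : ℝ :=
  |form f x| / ∏ i, pnorm (p i) (x i)

/-- The projective tensor norm `‖f‖_{p_1,…,p_m} = sup Q`. -/
def tnorm (f : (∀ i, Fin (d i)) → ℝ) (p : Fin m → ℝ) : ℝ :=
  sSup {q : ℝ | ∃ x : ∀ i, Fin (d i) → ℝ, (∀ i, x i ≠ 0) ∧ q = Qform f p x}

/-- `x ∈ S^d` is a singular vector of `f` with singular value `lam` if
`σ_i(x) = lam^{p_i'-1} x_i` for all `i`. -/
def IsSingular (f : (∀ i, Fin (d i)) → ℝ) (p : Fin m → ℝ) (lam : ℝ)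
    (x : ∀ i, Fin (d i) → ℝ) : Prop :=
  (∀ i, pnorm (p i) (x i) = 1) ∧
  ∀ i ji, sigma f p i x ji = lam ^ (conjExp (p i) - 1) * x i ji

/-- `s_{i,k}(x) = ψ_{p_k'}(∇_k f(x_1,…,ψ_{p_i'}(∇_i f(x)),…,x_m))`. -/
def sik (f : (∀ i, Fin (d i)) → ℝ) (p : Fin m → ℝ) (i k : Fin m)
    (x : ∀ l, Fin (d l) → ℝ) : Fin (d k) → ℝ :=
  psi (conjExp (p k))
    (grad f k (Function.update x i (psi (conjExp (p i)) (grad f i x))))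

/-- The `m`-partite graph associated to a nonnegative tensor. -/
def wGraph (f : (∀ i, Fin (d i)) → ℝ) : SimpleGraph ((k : Fin m) × Fin (d k)) where
  Adj a b := a.1 ≠ b.1 ∧ ∃ j : ∀ l, Fin (d l), j a.1 = a.2 ∧ j b.1 = b.2 ∧ 0 < f j
  symm := by
    constructor
    rintro a b ⟨h, j, h1, h2, h3⟩
    exact ⟨h.symm, j, h2, h1, h3⟩
  loopless := by constructor; rintro a ⟨h, -⟩; exact h rfl

/-- `f ≥ 0` is weakly irreducible if its graph is connected. -/
def WeaklyIrreducible (f : (∀ i, Fin (d i)) → ℝ) : Prop := (wGraph f).Connected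

/-- `f ≥ 0` is irreducible. -/
def Irreducible (f : (∀ i, Fin (d i)) → ℝ) : Prop :=
  ∀ J : Set ((k : Fin m) × Fin (d k)), J.Nonempty → J ≠ Set.univ →
    ∃ (k : Fin m) (j : ∀ l, Fin (d l)),
      (⟨k, j k⟩ : (l : Fin m) × Fin (d l)) ∈ J ∧
      (∀ l, l ≠ k → (⟨l, j l⟩ : (l : Fin m) × Fin (d l)) ∉ J) ∧ 0 < f j

/-- `T_α(z) = α_0 z + (α_1 σ_1(z),…,α_m σ_m(z))`. -/
def Tmap (f : (∀ i, Fin (d i)) → ℝ) (p : Fin m → ℝ) (a0 : ℝ) (a : Fin m → ℝ)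
    (z : ∀ i, Fin (d i) → ℝ) : ∀ i, Fin (d i) → ℝ :=
  fun i ji => a0 * z i ji + a i * sigma f p i z ji

/-- `Q_i(x) = ‖∇_i f(x)‖_{p_i'} / ∏_{k ≠ i} ‖x_k‖_{p_k}`. -/
def Qi (f : (∀ i, Fin (d i)) → ℝ) (p : Fin m → ℝ) (i : Fin m)
    (x : ∀ l, Fin (d l) → ℝ) : ℝ :=
  pnorm (conjExp (p i)) (grad f i x) / ∏ k ∈ Finset.univ.erase i, pnorm (p k) (x k)

/-- A critical point of `Q_i` with critical value `lam`. -/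
def IsCritQi (f : (∀ i, Fin (d i)) → ℝ) (p : Fin m → ℝ) (i : Fin m) (lam : ℝ)
    (x : ∀ l, Fin (d l) → ℝ) : Prop :=
  (∀ k, k ≠ i → pnorm (p k) (x k) = 1) ∧ grad f i x ≠ 0 ∧
  ∀ k, k ≠ i → ∀ jk,
    sik f p i k x jk = lam ^ (conjExp (p i) * (conjExp (p k) - 1)) * x k jk

/-- Collatz–Wielandt ratio `γ_i^-`. -/
def gammaMinus (f : (∀ i, Fin (d i)) → ℝ) (p : Fin m → ℝ) (i : Fin m)
    (x : ∀ l, Fin (d l) → ℝ) : ℝ :=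
  ∏ k ∈ Finset.univ.erase i, ⨅ jk : Fin (d k), (sik f p i k x jk / x k jk) ^ (p k - 1)

/-- Collatz–Wielandt ratio `γ_i^+`. -/
def gammaPlus (f : (∀ i, Fin (d i)) → ℝ) (p : Fin m → ℝ) (i : Fin m)
    (x : ∀ l, Fin (d l) → ℝ) : ℝ :=
  ∏ k ∈ Finset.univ.erase i, ⨆ jk : Fin (d k), (sik f p i k x jk / x k jk) ^ (p k - 1)

/-- The power-method map `G(x) = (s_{i,k}(x)/‖s_{i,k}(x)‖_{p_k})_{k≠i}`. -/
def Gmap (f : (∀ i, Fin (d i)) → ℝ) (p : Fin m → ℝ) (i : Fin m)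
    (x : ∀ l, Fin (d l) → ℝ) : ∀ l, Fin (d l) → ℝ :=
  fun k jk => sik f p i k x jk / pnorm (p k) (sik f p i k x)

/-- The Hilbert-type metric `μ` on `S^{d-d_i}_{++}`. -/
def mu (p : Fin m → ℝ) (i : Fin m) (x y : ∀ l, Fin (d l) → ℝ) : ℝ :=
  Real.log (∏ l ∈ Finset.univ.erase i,
    (⨆ jl : Fin (d l), (x l jl / y l jl) ^ (p l - 1)) /
    (⨅ jl : Fin (d l), (x l jl / y l jl) ^ (p l - 1)))


/-!
For positive `u, v` let `osc u v = max (u / v) / min (u / v)`, so that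
`μ(x, y) = log ∏_{l ≠ i} osc(x_l, y_l)^(p_l - 1)`. Because `f ≥ 0`, each partial gradient is
monotone and homogeneous of degree one in every other argument, and `ψ_q` is a monotone power
map; hence entrywise bounds `x_l ≤ c_l y_l` propagate through `s_{i,k}` with the factor
`((∏_{l ≠ i} c_l)^(p_i' - 1) ∏_{l ≠ i,k} c_l)^(p_k' - 1)`. Weak irreducibility keeps every
`s_{i,k}(x)` strictly positive, and normalisation does not change `osc`, so with
`ρ_l = osc(x_l, y_l) ≥ 1` and `R = ∏_{l ≠ i} ρ_l` we get
`osc(G(x)_k, G(y)_k)^(p_k - 1) ≤ R^(p_i' - 1) ∏_{l ≠ i,k} ρ_l`. The product over the `m - 1`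
indices `k` is `R^((m - 1) p_i' - 1)`, which is at most `∏ ρ_l^(p_l - 1)` exactly because
`(m - 1) p_i' ≤ p_l`.
-/

section Osc

variable {ι : Type*}

def osc (u v : ι → ℝ) : ℝ := (⨆ j, u j / v j) / ⨅ j, u j / v j

lemma osc_div_div (u v : ι → ℝ) {a b : ℝ} (ha : 0 < a) (hb : 0 < b) :
    osc (fun j => u j / a) (fun j => v j / b) = osc u v := by
  have hscale : ∀ j, u j / a / (v j / b) = b / a * (u j / v j) := fun j => by
    field_simp
  simp only [osc, hscale, ← Real.mul_iSup_of_nonneg (div_pos hb ha).le,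
    ← Real.mul_iInf_of_nonneg (div_pos hb ha).le]
  exact mul_div_mul_left _ _ (div_pos hb ha).ne'

lemma osc_le_of_le_mul [Nonempty ι] {u v : ι → ℝ} (hu : ∀ j, 0 < u j) (hv : ∀ j, 0 < v j)
    {C D : ℝ} (hC : ∀ j, u j ≤ C * v j) (hD : ∀ j, v j ≤ D * u j) : osc u v ≤ C * D := by
  obtain ⟨j₀⟩ := ‹Nonempty ι›
  have hDpos : 0 < D := pos_of_mul_pos_left ((hv j₀).trans_le (hD j₀)) (hu j₀).le
  rw [osc, ← div_inv_eq_mul]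
  refine div_le_div₀ (pos_of_mul_pos_left ((hu j₀).trans_le (hC j₀)) (hv j₀).le).le
    (ciSup_le fun j => (div_le_iff₀ (hv j)).2 (hC j)) (inv_pos.2 hDpos)
    (le_ciInf fun j => ?_)
  rw [le_div_iff₀ (hv j), inv_mul_le_iff₀ hDpos]
  exact hD j

variable [Finite ι]

lemma le_iSup_div_mul {u v : ι → ℝ} (hv : ∀ j, 0 < v j) (j : ι) :
    u j ≤ (⨆ j, u j / v j) * v j :=
  (div_le_iff₀ (hv j)).1 (le_ciSup (f := fun j => u j / v j) (Set.finite_range _).bddAbove j)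

variable [Nonempty ι]

lemma ciSup_rpow {g : ι → ℝ} (hg : ∀ j, 0 ≤ g j) {e : ℝ} (he : 0 ≤ e) :
    (⨆ j, g j) ^ e = ⨆ j, g j ^ e := by
  obtain ⟨j₀, hj₀⟩ := exists_eq_ciSup_of_finite (f := g)
  refine le_antisymm ?_ (ciSup_le fun j => ?_)
  · rw [← hj₀]
    exact le_ciSup (f := fun j => g j ^ e) (Set.finite_range _).bddAbove j₀
  · exact Real.rpow_le_rpow (hg j) (le_ciSup (Set.finite_range _).bddAbove j) he

lemma ciInf_rpow {g : ι → ℝ} (hg : ∀ j, 0 ≤ g j) {e : ℝ} (he : 0 ≤ e) :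
    (⨅ j, g j) ^ e = ⨅ j, g j ^ e := by
  obtain ⟨j₀, hj₀⟩ := exists_eq_ciInf_of_finite (f := g)
  refine le_antisymm (le_ciInf fun j => ?_) ?_
  · exact Real.rpow_le_rpow (hj₀ ▸ hg j₀) (ciInf_le (Set.finite_range _).bddBelow j) he
  · rw [← hj₀]
    exact ciInf_le (f := fun j => g j ^ e) (Set.finite_range _).bddBelow j₀

lemma iSup_rpow_div_iInf_rpow {u v : ι → ℝ} (hu : ∀ j, 0 ≤ u j) (hv : ∀ j, 0 ≤ v j)
    {e : ℝ} (he : 0 ≤ e) :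
    (⨆ j, (u j / v j) ^ e) / (⨅ j, (u j / v j) ^ e) = osc u v ^ e := by
  have hg : ∀ j, 0 ≤ u j / v j := fun j => div_nonneg (hu j) (hv j)
  rw [osc, Real.div_rpow (Real.iSup_nonneg hg) (Real.iInf_nonneg hg),
    ciSup_rpow hg he, ciInf_rpow hg he]

variable {u v : ι → ℝ}

lemma iInf_div_pos (hu : ∀ j, 0 < u j) (hv : ∀ j, 0 < v j) : 0 < ⨅ j, u j / v j := by
  obtain ⟨j₀, hj₀⟩ := exists_eq_ciInf_of_finite (f := fun j => u j / v j)
  exact hj₀ ▸ div_pos (hu j₀) (hv j₀)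

lemma one_le_osc (hu : ∀ j, 0 < u j) (hv : ∀ j, 0 < v j) : 1 ≤ osc u v :=
  (one_le_div (iInf_div_pos hu hv)).2 <|
    ciInf_le_ciSup (Set.finite_range _).bddBelow (Set.finite_range _).bddAbove

lemma le_inv_iInf_div_mul (hu : ∀ j, 0 < u j) (hv : ∀ j, 0 < v j) (j : ι) :
    v j ≤ (⨅ j, u j / v j)⁻¹ * u j := by
  rw [← div_eq_inv_mul, le_div_iff₀ (iInf_div_pos hu hv), ← le_div_iff₀' (hv j)]
  exact ciInf_le (Set.finite_range _).bddBelow j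

end Osc

section Tensor

variable {f : (∀ i, Fin (d i)) → ℝ}

lemma grad_eq_sum (f : (∀ i, Fin (d i)) → ℝ) (k : Fin m) (z : ∀ l, Fin (d l) → ℝ)
    (jk : Fin (d k)) :
    grad f k z jk = ∑ j with j k = jk, f j * ∏ l ∈ univ.erase k, z l (j l) := by
  rw [grad, form, sum_filter]
  refine sum_congr rfl fun j _ => ?_
  rw [← mul_prod_erase univ _ (mem_univ k), Function.update_self,
    prod_congr rfl fun l hl => by rw [Function.update_of_ne (ne_of_mem_erase hl)]]
  split_ifs <;> simp [*]

lemma grad_nonneg (hf : ∀ j, 0 ≤ f j) {k : Fin m} {z : ∀ l, Fin (d l) → ℝ}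
    (hz : ∀ l, l ≠ k → ∀ j, 0 ≤ z l j) (jk : Fin (d k)) : 0 ≤ grad f k z jk := by
  rw [grad_eq_sum]
  exact sum_nonneg fun j _ =>
    mul_nonneg (hf j) (prod_nonneg fun l hl => hz l (ne_of_mem_erase hl) _)

lemma grad_pos (hf : ∀ j, 0 ≤ f j) {k : Fin m} {z : ∀ l, Fin (d l) → ℝ}
    (hz : ∀ l, l ≠ k → ∀ j, 0 < z l j) {jk : Fin (d k)}
    (hjk : ∃ j : ∀ l, Fin (d l), j k = jk ∧ 0 < f j) : 0 < grad f k z jk := by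
  obtain ⟨j₀, hj₀k, hj₀⟩ := hjk
  rw [grad_eq_sum]
  refine sum_pos' (fun j _ => ?_) ⟨j₀, by simp [hj₀k], ?_⟩
  · exact mul_nonneg (hf j) (prod_nonneg fun l hl => (hz l (ne_of_mem_erase hl) _).le)
  · exact mul_pos hj₀ (prod_pos fun l hl => hz l (ne_of_mem_erase hl) _)

lemma grad_le_prod_mul (hf : ∀ j, 0 ≤ f j) {k : Fin m} {z w : ∀ l, Fin (d l) → ℝ}
    {c : Fin m → ℝ} (hz : ∀ l, l ≠ k → ∀ j, 0 ≤ z l j)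
    (hzw : ∀ l, l ≠ k → ∀ j, z l j ≤ c l * w l j) (jk : Fin (d k)) :
    grad f k z jk ≤ (∏ l ∈ univ.erase k, c l) * grad f k w jk := by
  rw [grad_eq_sum, grad_eq_sum, mul_sum]
  refine sum_le_sum fun j _ => ?_
  rw [mul_left_comm, ← prod_mul_distrib]
  exact mul_le_mul_of_nonneg_left (prod_le_prod (fun l hl => hz l (ne_of_mem_erase hl) _)
    fun l hl => hzw l (ne_of_mem_erase hl) _) (hf j)

lemma one_lt_conjExp {q : ℝ} (hq : 1 < q) : 1 < conjExp q := by
  rw [conjExp, one_lt_div (by linarith)]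
  linarith

lemma conjExp_sub_one_mul {q : ℝ} (hq : 1 < q) : (conjExp q - 1) * (q - 1) = 1 := by
  rw [conjExp]
  field_simp [show q - 1 ≠ 0 by linarith]
  ring

lemma psi_of_nonneg {q : ℝ} (hq : 1 < q) {n : ℕ} {y : Fin n → ℝ} {j : Fin n}
    (hy : 0 ≤ y j) : psi q y j = y j ^ (q - 1) := by
  rcases hy.eq_or_lt with h | h
  · simp [psi, ← h, Real.zero_rpow (by linarith : q - 1 ≠ 0)]
  · rw [psi, Real.sign_of_pos h, mul_one, abs_of_pos h]

lemma psi_pos {q : ℝ} (hq : 1 < q) {n : ℕ} {y : Fin n → ℝ} {j : Fin n} (hy : 0 < y j) :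
    0 < psi q y j := by
  rw [psi_of_nonneg hq hy.le]
  exact Real.rpow_pos_of_pos hy _

lemma psi_nonneg {q : ℝ} (hq : 1 < q) {n : ℕ} {y : Fin n → ℝ} {j : Fin n} (hy : 0 ≤ y j) :
    0 ≤ psi q y j := by
  rw [psi_of_nonneg hq hy]
  exact Real.rpow_nonneg hy _

lemma psi_le_rpow_mul {q : ℝ} (hq : 1 < q) {n : ℕ} {u v : Fin n → ℝ} {j : Fin n} {c : ℝ}
    (hu : 0 ≤ u j) (hv : 0 ≤ v j) (hc : 0 ≤ c) (huv : u j ≤ c * v j) :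
    psi q u j ≤ c ^ (q - 1) * psi q v j := by
  rw [psi_of_nonneg hq hu, psi_of_nonneg hq hv, ← Real.mul_rpow hc hv]
  exact Real.rpow_le_rpow hu huv (by linarith)

variable {p : Fin m → ℝ} {i : Fin m}

def sikFactor (p : Fin m → ℝ) (i k : Fin m) (c : Fin m → ℝ) : ℝ :=
  (∏ l ∈ univ.erase i, c l) ^ (conjExp (p i) - 1) * ∏ l ∈ (univ.erase i).erase k, c l

lemma sikFactor_nonneg {c : Fin m → ℝ} (hc : ∀ l, l ≠ i → 0 ≤ c l) (k : Fin m) :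
    0 ≤ sikFactor p i k c :=
  mul_nonneg (Real.rpow_nonneg (prod_nonneg fun l hl => hc l (ne_of_mem_erase hl)) _)
    (prod_nonneg fun l hl => hc l (ne_of_mem_erase (mem_of_mem_erase hl)))

lemma sikFactor_mul {a c : Fin m → ℝ} (ha : ∀ l, l ≠ i → 0 ≤ a l)
    (hc : ∀ l, l ≠ i → 0 ≤ c l) (k : Fin m) :
    sikFactor p i k (a * c) = sikFactor p i k a * sikFactor p i k c := by
  simp only [sikFactor, Pi.mul_apply, prod_mul_distrib]
  rw [Real.mul_rpow (prod_nonneg fun l hl => ha l (ne_of_mem_erase hl))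
    (prod_nonneg fun l hl => hc l (ne_of_mem_erase hl))]
  ring

lemma sik_le_mul (hp : ∀ k, 1 < p k) (hf : ∀ j, 0 ≤ f j) {k : Fin m} (hki : k ≠ i)
    {x y : ∀ l, Fin (d l) → ℝ} {c : Fin m → ℝ} (hx : ∀ l, l ≠ i → ∀ j, 0 ≤ x l j)
    (hy : ∀ l, l ≠ i → ∀ j, 0 ≤ y l j) (hc : ∀ l, l ≠ i → 0 ≤ c l)
    (hxy : ∀ l, l ≠ i → ∀ j, x l j ≤ c l * y l j) (jk : Fin (d k)) :
    sik f p i k x jk ≤ sikFactor p i k c ^ (conjExp (p k) - 1) * sik f p i k y jk := by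
  set K := (∏ l ∈ univ.erase i, c l) ^ (conjExp (p i) - 1)
  set u := psi (conjExp (p i)) (grad f i x)
  set v := psi (conjExp (p i)) (grad f i y)
  have hq := one_lt_conjExp (hp i)
  have hu : ∀ ji, 0 ≤ u ji := fun ji => psi_nonneg hq (grad_nonneg hf hx ji)
  have hv : ∀ ji, 0 ≤ v ji := fun ji => psi_nonneg hq (grad_nonneg hf hy ji)
  have huv : ∀ ji, u ji ≤ K * v ji := fun ji =>
    psi_le_rpow_mul hq (grad_nonneg hf hx ji) (grad_nonneg hf hy ji)
      (prod_nonneg fun l hl => hc l (ne_of_mem_erase hl)) (grad_le_prod_mul hf hx hxy ji)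
  have hxu : ∀ l, l ≠ k → ∀ j, 0 ≤ Function.update x i u l j := by
    intro l _ j
    rcases eq_or_ne l i with rfl | hli
    · simpa using hu j
    · simpa [hli] using hx l hli j
  have hyv : ∀ l, l ≠ k → ∀ j, 0 ≤ Function.update y i v l j := by
    intro l _ j
    rcases eq_or_ne l i with rfl | hli
    · simpa using hv j
    · simpa [hli] using hy l hli j
  have hxyuv : ∀ l, l ≠ k → ∀ j,
      Function.update x i u l j ≤ Function.update c i K l * Function.update y i v l j := by
    intro l _ j
    rcases eq_or_ne l i with rfl | hli
    · simpa using huv j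
    · simpa [hli] using hxy l hli j
  have hfactor : ∏ l ∈ univ.erase k, Function.update c i K l = sikFactor p i k c := by
    rw [prod_update_of_mem (mem_erase.2 ⟨hki.symm, mem_univ i⟩), sdiff_singleton_eq_erase,
      erase_right_comm, sikFactor]
  exact psi_le_rpow_mul (one_lt_conjExp (hp k)) (grad_nonneg hf hxu jk)
    (grad_nonneg hf hyv jk) (sikFactor_nonneg hc k) (hfactor ▸ grad_le_prod_mul hf hxu hxyuv jk)

lemma prod_prod_erase_eq_pow {ι M : Type*} [DecidableEq ι] [CommMonoid M] (s : Finset ι)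
    (g : ι → M) : ∏ k ∈ s, ∏ l ∈ s.erase k, g l = (∏ l ∈ s, g l) ^ (#s - 1) := by
  rw [prod_comm' (t' := s) (s' := s.erase), ← prod_pow]
  · exact prod_congr rfl fun l hl => by rw [prod_const, card_erase_of_mem hl]
  · intro k l
    simp only [mem_erase]
    tauto

lemma prod_rpow_mul_prod_erase_le {ι : Type*} [DecidableEq ι] (s : Finset ι) {ρ e : ι → ℝ}
    {a : ℝ} (hρ : ∀ l ∈ s, 1 ≤ ρ l) (he : ∀ l ∈ s, (a + 1) * #s - 1 ≤ e l) :
    ∏ k ∈ s, ((∏ l ∈ s, ρ l) ^ a * ∏ l ∈ s.erase k, ρ l) ≤ ∏ l ∈ s, ρ l ^ e l := by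
  rcases s.eq_empty_or_nonempty with rfl | hs
  · simp
  have hρ₀ : ∀ l ∈ s, 0 ≤ ρ l := fun l hl => zero_le_one.trans (hρ l hl)
  have hR : 0 < ∏ l ∈ s, ρ l := prod_pos fun l hl => one_pos.trans_le (hρ l hl)
  calc ∏ k ∈ s, ((∏ l ∈ s, ρ l) ^ a * ∏ l ∈ s.erase k, ρ l)
      = (∏ l ∈ s, ρ l) ^ ((a + 1) * #s - 1) := by
        rw [prod_mul_distrib, prod_const, prod_prod_erase_eq_pow, ← Real.rpow_mul_natCast hR.le,
          ← Real.rpow_natCast, Nat.cast_sub hs.card_pos, ← Real.rpow_add hR, Nat.cast_one]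
        ring_nf
    _ = ∏ l ∈ s, ρ l ^ ((a + 1) * #s - 1) := (Real.finsetProd_rpow s ρ hρ₀ _).symm
    _ ≤ ∏ l ∈ s, ρ l ^ e l :=
        prod_le_prod (fun l hl => Real.rpow_nonneg (hρ₀ l hl) _)
          fun l hl => Real.rpow_le_rpow_of_exponent_le (hρ l hl) (he l hl)

lemma pnorm_pos {q : ℝ} {n : ℕ} [Nonempty (Fin n)] {y : Fin n → ℝ} (hy : ∀ j, 0 < y j) :
    0 < pnorm q y :=
  Real.rpow_pos_of_pos
    (sum_pos (fun j _ => Real.rpow_pos_of_pos (abs_pos.2 (hy j).ne') _) univ_nonempty) _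

variable [∀ l, Nonempty (Fin (d l))]

lemma WeaklyIrreducible.exists_pos (hm : 2 ≤ m) (hf : WeaklyIrreducible f) (k : Fin m)
    (jk : Fin (d k)) :
    ∃ j : ∀ l, Fin (d l), j k = jk ∧ 0 < f j := by
  obtain ⟨l, hlk⟩ := Fintype.exists_ne_of_one_lt_card (by rw [Fintype.card_fin]; omega) k
  have : Nontrivial ((k : Fin m) × Fin (d k)) :=
    ⟨⟨k, jk⟩, ⟨l, Classical.arbitrary _⟩, fun h => hlk (congrArg Sigma.fst h).symm⟩
  obtain ⟨_, -, j, hj, -, hfj⟩ := hf.preconnected.exists_adj_of_nontrivial ⟨k, jk⟩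
  exact ⟨j, hj, hfj⟩

lemma mu_eq_log_prod_osc (hp : ∀ k, 1 < p k) {x y : ∀ l, Fin (d l) → ℝ}
    (hx : ∀ l, l ≠ i → ∀ j, 0 ≤ x l j) (hy : ∀ l, l ≠ i → ∀ j, 0 ≤ y l j) :
    mu p i x y = Real.log (∏ l ∈ univ.erase i, osc (x l) (y l) ^ (p l - 1)) := by
  rw [mu]
  congr 1
  exact prod_congr rfl fun l hl => iSup_rpow_div_iInf_rpow (hx l (ne_of_mem_erase hl))
    (hy l (ne_of_mem_erase hl)) (by linarith [hp l])

variable (hm : 2 ≤ m) (hp : ∀ k, 1 < p k) (hf : ∀ j, 0 ≤ f j) (hirr : WeaklyIrreducible f)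
include hm hp hf hirr

lemma sik_pos {x : ∀ l, Fin (d l) → ℝ} (hx : ∀ l, l ≠ i → ∀ j, 0 < x l j) (k : Fin m)
    (jk : Fin (d k)) : 0 < sik f p i k x jk := by
  have hxu : ∀ l, l ≠ k → ∀ j,
      0 < Function.update x i (psi (conjExp (p i)) (grad f i x)) l j := by
    intro l _ j
    rcases eq_or_ne l i with rfl | hli
    · simpa using psi_pos (one_lt_conjExp (hp l)) (grad_pos hf hx (hirr.exists_pos hm l j))
    · simpa [hli] using hx l hli j
  exact psi_pos (one_lt_conjExp (hp k)) (grad_pos hf hxu (hirr.exists_pos hm k jk))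

lemma Gmap_pos {x : ∀ l, Fin (d l) → ℝ} (hx : ∀ l, l ≠ i → ∀ j, 0 < x l j) (k : Fin m)
    (jk : Fin (d k)) : 0 < Gmap f p i x k jk :=
  div_pos (sik_pos hm hp hf hirr hx k jk) (pnorm_pos (sik_pos hm hp hf hirr hx k))

lemma osc_Gmap_rpow_le {x y : ∀ l, Fin (d l) → ℝ} (hx : ∀ l, l ≠ i → ∀ j, 0 < x l j)
    (hy : ∀ l, l ≠ i → ∀ j, 0 < y l j) {k : Fin m} (hki : k ≠ i) :
    osc (Gmap f p i x k) (Gmap f p i y k) ^ (p k - 1) ≤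
      sikFactor p i k (fun l => osc (x l) (y l)) := by
  set c : Fin m → ℝ := fun l => ⨆ j, x l j / y l j
  set a : Fin m → ℝ := fun l => (⨅ j, x l j / y l j)⁻¹
  have hc : ∀ l, l ≠ i → 0 ≤ c l := fun l hl =>
    Real.iSup_nonneg fun j => (div_pos (hx l hl j) (hy l hl j)).le
  have ha : ∀ l, l ≠ i → 0 ≤ a l := fun l hl => (inv_pos.2 (iInf_div_pos (hx l hl) (hy l hl))).le
  have hsx := sik_pos hm hp hf hirr hx k
  have hsy := sik_pos hm hp hf hirr hy k
  have hosc : osc (sik f p i k x) (sik f p i k y) ≤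
      sikFactor p i k (fun l => osc (x l) (y l)) ^ (conjExp (p k) - 1) := by
    rw [show (fun l => osc (x l) (y l)) = c * a from funext fun l => div_eq_mul_inv _ _,
      sikFactor_mul hc ha, Real.mul_rpow (sikFactor_nonneg hc k) (sikFactor_nonneg ha k)]
    refine osc_le_of_le_mul hsx hsy
      (sik_le_mul hp hf hki (fun l hl j => (hx l hl j).le) (fun l hl j => (hy l hl j).le) hc
        fun l hl j => le_iSup_div_mul (hy l hl) j)
      (sik_le_mul hp hf hki (fun l hl j => (hy l hl j).le) (fun l hl j => (hx l hl j).le) ha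
        fun l hl j => le_inv_iInf_div_mul (hx l hl) (hy l hl) j)
  unfold Gmap
  rw [osc_div_div _ _ (pnorm_pos hsx) (pnorm_pos hsy)]
  calc osc (sik f p i k x) (sik f p i k y) ^ (p k - 1)
      ≤ (sikFactor p i k (fun l => osc (x l) (y l)) ^ (conjExp (p k) - 1)) ^ (p k - 1) :=
        Real.rpow_le_rpow (zero_le_one.trans (one_le_osc hsx hsy)) hosc (by linarith [hp k])
    _ = sikFactor p i k (fun l => osc (x l) (y l)) := by
        rw [← Real.rpow_mul (sikFactor_nonneg (fun l hl => zero_le_one.trans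
          (one_le_osc (hx l hl) (hy l hl))) k), conjExp_sub_one_mul (hp k), Real.rpow_one]

end Tensor

/-- the power-method map `G` is nonexpansive for the metric `μ`. -/
theorem statement_17 {m : ℕ} {d : Fin m → ℕ} (hm : 2 ≤ m) (hd : ∀ k, 0 < d k)
    (p : Fin m → ℝ) (hp : ∀ k, 1 < p k)
    (f : (∀ i, Fin (d i)) → ℝ) (hf0 : ∀ j, 0 ≤ f j)
    (hwirr : WeaklyIrreducible f)
    (i : Fin m) (hpi : ∀ k, k ≠ i → ((m : ℝ) - 1) * conjExp (p i) ≤ p k) :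
    ∀ x y : ∀ l, Fin (d l) → ℝ,
      (∀ l, l ≠ i → ∀ jl, 0 < x l jl) → (∀ l, l ≠ i → pnorm (p l) (x l) = 1) →
      (∀ l, l ≠ i → ∀ jl, 0 < y l jl) → (∀ l, l ≠ i → pnorm (p l) (y l) = 1) →
      mu p i (Gmap f p i x) (Gmap f p i y) ≤ mu p i x y := by
  intro x y hx _ hy _
  have : ∀ l, Nonempty (Fin (d l)) := fun l => Fin.pos_iff_nonempty.1 (hd l)
  have hGx := Gmap_pos hm hp hf0 hwirr hx
  have hGy := Gmap_pos hm hp hf0 hwirr hy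
  have hGosc : ∀ k, 1 ≤ osc (Gmap f p i x k) (Gmap f p i y k) := fun k =>
    one_le_osc (hGx k) (hGy k)
  have hcard : (#(univ.erase i) : ℝ) = m - 1 := by
    rw [card_erase_of_mem (mem_univ i), card_univ, Fintype.card_fin, Nat.cast_pred (by omega)]
  rw [mu_eq_log_prod_osc hp (fun l _ j => (hGx l j).le) (fun l _ j => (hGy l j).le),
    mu_eq_log_prod_osc hp (fun l hl j => (hx l hl j).le) (fun l hl j => (hy l hl j).le)]
  refine Real.log_le_log
    (prod_pos fun k _ => Real.rpow_pos_of_pos (one_pos.trans_le (hGosc k)) _) ?_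
  calc ∏ k ∈ univ.erase i, osc (Gmap f p i x k) (Gmap f p i y k) ^ (p k - 1)
      ≤ ∏ k ∈ univ.erase i, sikFactor p i k (fun l => osc (x l) (y l)) :=
        prod_le_prod (fun k _ => Real.rpow_nonneg (zero_le_one.trans (hGosc k)) _)
          fun k hk => osc_Gmap_rpow_le hm hp hf0 hwirr hx hy (ne_of_mem_erase hk)
    _ ≤ ∏ l ∈ univ.erase i, osc (x l) (y l) ^ (p l - 1) := by
        refine prod_rpow_mul_prod_erase_le _
          (fun l hl => one_le_osc (hx l (ne_of_mem_erase hl)) (hy l (ne_of_mem_erase hl)))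
          fun l hl => ?_
        rw [hcard, sub_add_cancel]
        linarith [hpi l (ne_of_mem_erase hl)]

end TensorPF
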